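/- arXiv:1806.09702 — 2 statements merged into one kernel-verified Lean document; each statement's English description precedes it below -/
import Mathlib

section
/- For integers n > 3 and 3 ≤ k ≤ n, the quantity C(2n, k) - C(2n, k-2) is strictly greater than n(2n+1), where C denotes the binomial coefficient. -/
/-!
Comparing `C(2n, k)` with `C(2n, k - 2)` through two steps of Pascal's ratio gives
`k (k - 1) C(2n, k) = (2n - k + 2)(2n - k + 1) C(2n, k - 2)`, and the difference of the two
quadratic factors is `(2n + 1) · 2(n - k + 1)`. Hence
`C(2n, k) - C(2n, k - 2) = (2n + 1) · 2(n - k + 1) C(2n, k - 2) / (k (k - 1))`, and after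
cancelling `2n + 1` the claim becomes `n k (k - 1) < 2(n - k + 1) C(2n, k - 2)`. For `k = 3, 4`
this is explicit; for `k ≥ 5` it follows from `C(2n, k - 2) ≥ C(2n, 3)` and `n k (k - 1) < 2 C(2n, 3)`.
-/

namespace Nat

theorem choose_le_choose_of_le_half_left {n r s : ℕ} (hrs : r ≤ s) (hs : s ≤ n / 2) :
    n.choose r ≤ n.choose s := by
  induction s, hrs using Nat.le_induction with
  | base => exact le_rfl
  | succ s _ ih => exact (ih (by omega)).trans (choose_le_succ_of_lt_half_left (by omega))

theorem choose_add_two_mul (n k : ℕ) :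
    n.choose (k + 2) * ((k + 2) * (k + 1)) = n.choose k * ((n - k) * (n - k - 1)) := by
  have h₁ := choose_succ_right_eq n (k + 1)
  have h₀ := choose_succ_right_eq n k
  rw [show n - (k + 1) = n - k - 1 by omega] at h₁
  calc n.choose (k + 2) * ((k + 2) * (k + 1))
      = n.choose (k + 1 + 1) * (k + 1 + 1) * (k + 1) := by ring
    _ = n.choose (k + 1) * (k + 1) * (n - k - 1) := by rw [h₁]; ring
    _ = n.choose k * ((n - k) * (n - k - 1)) := by rw [h₀]; ring

theorem choose_two_right_mul (n : ℕ) : n.choose 2 * 2 = n * (n - 1) := by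
  simpa using choose_add_two_mul n 0

theorem choose_three_right_mul (n : ℕ) : n.choose 3 * 6 = n * (n - 1) * (n - 2) := by
  simpa [mul_assoc, Nat.sub_sub] using choose_add_two_mul n 1

theorem choose_two_mul_add_two_mul {n k : ℕ} (hk : k < n) :
    (2 * n).choose (k + 2) * ((k + 2) * (k + 1)) =
      (2 * n).choose k * ((2 * n + 1) * (2 * (n - k - 1)) + (k + 2) * (k + 1)) := by
  obtain ⟨m, rfl⟩ : ∃ m, n = k + 1 + m := ⟨n - k - 1, by omega⟩
  rw [choose_add_two_mul, show 2 * (k + 1 + m) - k = k + 2 + 2 * m by omega,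
    show k + 1 + m - k - 1 = m by omega, show k + 2 + 2 * m - 1 = k + 1 + 2 * m by omega]
  ring

end Nat

open Nat

theorem mul_lt_choose_two_mul_sub_choose {n k : ℕ} (hk : k < n)
    (h : n * ((k + 2) * (k + 1)) < 2 * (n - k - 1) * (2 * n).choose k) :
    n * (2 * n + 1) < (2 * n).choose (k + 2) - (2 * n).choose k := by
  apply Nat.lt_sub_of_add_lt
  apply Nat.lt_of_mul_lt_mul_right (a := (k + 2) * (k + 1))
  rw [choose_two_mul_add_two_mul hk]
  nlinarith

theorem mul_lt_two_mul_sub_mul_choose {n k : ℕ} (hn : 3 < n) (hk : 1 ≤ k) (hkn : k + 2 ≤ n) :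
    n * ((k + 2) * (k + 1)) < 2 * (n - k - 1) * (2 * n).choose k := by
  obtain ⟨m, rfl⟩ : ∃ m, n = k + 2 + m := ⟨n - k - 2, by omega⟩
  rw [show k + 2 + m - k - 1 = m + 1 by omega]
  obtain rfl | rfl | hk3 : k = 1 ∨ k = 2 ∨ 3 ≤ k := by omega
  · rw [choose_one_right]
    nlinarith
  · have h := choose_two_right_mul (2 * (2 + 2 + m))
    rw [show 2 * (2 + 2 + m) - 1 = 2 * m + 7 by omega] at h
    nlinarith
  · have hmono : (2 * (k + 2 + m)).choose 3 ≤ (2 * (k + 2 + m)).choose k :=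
      choose_le_choose_of_le_half_left hk3 (by omega)
    have h := choose_three_right_mul (2 * (k + 2 + m))
    rw [show 2 * (k + 2 + m) - 1 = 2 * k + 2 * m + 3 by omega,
      show 2 * (k + 2 + m) - 2 = 2 * k + 2 * m + 2 by omega] at h
    have hquad : 3 * ((k + 2) * (k + 1)) < 2 * ((2 * k + 2 * m + 3) * (2 * k + 2 * m + 2)) := by
      nlinarith
    have hcubic : (k + 2 + m) * ((k + 2) * (k + 1)) < 2 * (2 * (k + 2 + m)).choose 3 := by
      have := Nat.mul_lt_mul_of_pos_left hquad (show 0 < k + 2 + m by omega)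
      nlinarith
    calc (k + 2 + m) * ((k + 2) * (k + 1)) < 2 * (2 * (k + 2 + m)).choose 3 := hcubic
      _ ≤ 2 * (m + 1) * (2 * (k + 2 + m)).choose k := by gcongr; omega

/-- For integers `n > 3` and `3 ≤ k ≤ n`, one has
`C(2n, k) - C(2n, k-2) > n(2n+1)`. -/
theorem dim_fundamental_rep_gt (n k : ℕ) (hn : 3 < n) (hk : 3 ≤ k) (hkn : k ≤ n) :
    Nat.choose (2 * n) k - Nat.choose (2 * n) (k - 2) > n * (2 * n + 1) := by
  obtain ⟨j, rfl⟩ : ∃ j, k = j + 2 := ⟨k - 2, by omega⟩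
  rw [Nat.add_sub_cancel]
  exact mul_lt_choose_two_mul_sub_choose (by omega)
    (mul_lt_two_mul_sub_mul_choose hn (by omega) hkn)
end

section
/- Let h = g ⊕ k ⊕ V be a Lie algebra with g, k subalgebras and V a subspace with [V,V] ⊆ g ⊕ k, and write Ω_g, Ω_k : Λ²V → g, k for the two components of the bracket restricted to V. For real parameters r, s define a new anticommutative product on g ⊕ k ⊕ V agreeing with the original bracket except that the bracket of two elements of V is r·Ω_g + s·Ω_k. If there exist X, Y, Z ∈ V with the g-component Jacobiator Ω_g(X,Y,Z) := Ω_g(X,Y)·Z + Ω_g(Z,X)·Y + Ω_g(Y,Z)·X nonzero (where g acts on V by the original bracket), then the deformed product satisfies the Jacobi identity if and only if r = s. -/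
/-!
On a triple `X, Y, Z` from `V` the deformed Jacobiator is `r • Ω_g(X,Y,Z) + s • Ω_k(X,Y,Z)`,
and `Ω_g + Ω_k` is the Jacobiator of `h` there because `[V, V] ⊆ g ⊕ k`; hence it equals
`(r - s) • Ω_g(X,Y,Z)`. Conversely, for `r = s` the deformed bracket is
`[x, y] + (r - 1) [πv x, πv y]`, a rescaling of the odd-odd bracket of the `ℤ/2`-grading
`(g ⊕ k) ⊕ V`; the correction terms of its Jacobiator regroup into Jacobi identities of `h`
on triples with at most one entry outside `V`.
-/

section

variable {R L : Type*} [CommRing R] [LieRing L] [LieAlgebra R L]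

def jacobiator {α : Type*} [Add α] (B : α → α → α) (x y z : α) : α :=
  B (B x y) z + B (B z x) y + B (B y z) x

theorem jacobiator_lie (x y z : L) : jacobiator (fun a b : L ↦ ⁅a, b⁆) x y z = 0 := by
  rw [jacobiator, ← lie_skew ⁅x, y⁆, ← lie_skew ⁅z, x⁆, ← lie_skew ⁅y, z⁆, ← neg_eq_zero,
    ← lie_jacobi x y z]
  abel

section Graded

variable (p : L →ₗ[R] L)

theorem proj_lie_eq_lie_add_lie (hsub : ∀ a b, p ⁅a - p a, b - p b⁆ = 0)
    (hnorm : ∀ a b, p ⁅a - p a, p b⁆ = ⁅a - p a, p b⁆) (hVV : ∀ a b, p ⁅p a, p b⁆ = 0)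
    (x y : L) : p ⁅x, y⁆ = ⁅x - p x, p y⁆ + ⁅p x, y - p y⁆ := by
  have hsplit : ⁅x, y⁆ = ⁅x - p x, y - p y⁆ + ⁅x - p x, p y⁆ + ⁅p x, y - p y⁆ + ⁅p x, p y⁆ := by
    simp only [sub_lie, lie_sub]
    abel
  have hskew : p ⁅p x, y - p y⁆ = ⁅p x, y - p y⁆ := by
    rw [← lie_skew, map_neg, hnorm]
  rw [hsplit, map_add, map_add, map_add, hsub, hnorm, hskew, hVV, zero_add, add_zero]

theorem jacobiator_lie_add_smul_lie_proj (hsub : ∀ a b, p ⁅a - p a, b - p b⁆ = 0)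
    (hnorm : ∀ a b, p ⁅a - p a, p b⁆ = ⁅a - p a, p b⁆) (hVV : ∀ a b, p ⁅p a, p b⁆ = 0)
    (t : R) (x y z : L) :
    jacobiator (fun a b ↦ ⁅a, b⁆ + t • ⁅p a, p b⁆) x y z = 0 := by
  have hexpand : ∀ a b c : L, ⁅⁅a, b⁆ + t • ⁅p a, p b⁆, c⁆ + t • ⁅p (⁅a, b⁆ + t • ⁅p a, p b⁆), p c⁆
      = ⁅⁅a, b⁆, c⁆ + t • (⁅⁅p a, p b⁆, c⁆ + ⁅p ⁅a, b⁆, p c⁆) := by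
    intro a b c
    rw [map_add, map_smul, hVV, smul_zero, add_zero, add_lie, smul_lie, smul_add]
    abel
  have j0 := jacobiator_lie x y z
  have j1 := jacobiator_lie (p x) (p y) (p z)
  have j2 := jacobiator_lie (x - p x) (p y) (p z)
  have j3 := jacobiator_lie (y - p y) (p z) (p x)
  have j4 := jacobiator_lie (z - p z) (p x) (p y)
  simp only [jacobiator] at j0 j1 j2 j3 j4 ⊢
  have hproj := proj_lie_eq_lie_add_lie p hsub hnorm hVV
  rw [hexpand, hexpand, hexpand, hproj x y, hproj z x, hproj y z]
  simp only [sub_lie, lie_sub, add_lie] at j2 j3 j4 ⊢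
  linear_combination (norm := module) j0 + t • (j1 + j2 + j3 + j4)

end Graded

section Deformation

variable (πg πk πv : L →ₗ[R] L) (r s : R) (B : L → L → L)

theorem deformed_apply_apply_of_proj_eq_self (hvg : πv ∘ₗ πg = 0) (hvk : πv ∘ₗ πk = 0)
    (hB : ∀ a b, B a b = ⁅a, b⁆ - ⁅πv a, πv b⁆ + r • πg ⁅πv a, πv b⁆ + s • πk ⁅πv a, πv b⁆)
    {X Y Z : L} (hX : πv X = X) (hY : πv Y = Y) :
    B (B X Y) Z = r • ⁅πg ⁅X, Y⁆, Z⁆ + s • ⁅πk ⁅X, Y⁆, Z⁆ := by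
  have hXY : B X Y = r • πg ⁅X, Y⁆ + s • πk ⁅X, Y⁆ := by
    rw [hB, hX, hY, sub_self, zero_add]
  have hV : πv (B X Y) = 0 := by
    rw [hXY, map_add, map_smul, map_smul, ← LinearMap.comp_apply, ← LinearMap.comp_apply,
      hvg, hvk, LinearMap.zero_apply, smul_zero, smul_zero, add_zero]
  rw [hB, hV, hXY]
  simp only [zero_lie, map_zero, smul_zero, sub_zero, add_zero, add_lie, smul_lie]

theorem jacobiator_deformed_of_proj_eq_self (hsum : πg + πk + πv = LinearMap.id)
    (hvg : πv ∘ₗ πg = 0) (hvk : πv ∘ₗ πk = 0) (hVV : ∀ a b, πv ⁅πv a, πv b⁆ = 0)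
    (hB : ∀ a b, B a b = ⁅a, b⁆ - ⁅πv a, πv b⁆ + r • πg ⁅πv a, πv b⁆ + s • πk ⁅πv a, πv b⁆)
    {X Y Z : L} (hX : πv X = X) (hY : πv Y = Y) (hZ : πv Z = Z) :
    jacobiator B X Y Z = (r - s) • (⁅πg ⁅X, Y⁆, Z⁆ + ⁅πg ⁅Z, X⁆, Y⁆ + ⁅πg ⁅Y, Z⁆, X⁆) := by
  have hk : ∀ {U W : L}, πv U = U → πv W = W → πk ⁅U, W⁆ = ⁅U, W⁆ - πg ⁅U, W⁆ := by
    intro U W hU hW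
    have hV : πv ⁅U, W⁆ = 0 := by simpa only [hU, hW] using hVV U W
    have hUW := LinearMap.congr_fun hsum ⁅U, W⁆
    rw [LinearMap.add_apply, LinearMap.add_apply, LinearMap.id_apply, hV, add_zero] at hUW
    exact eq_sub_of_add_eq' hUW
  have hjac := jacobiator_lie X Y Z
  rw [jacobiator] at hjac ⊢
  rw [deformed_apply_apply_of_proj_eq_self πg πk πv r s B hvg hvk hB hX hY,
    deformed_apply_apply_of_proj_eq_self πg πk πv r s B hvg hvk hB hZ hX,
    deformed_apply_apply_of_proj_eq_self πg πk πv r s B hvg hvk hB hY hZ,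
    hk hX hY, hk hZ hX, hk hY hZ]
  simp only [sub_lie]
  linear_combination (norm := module) s • hjac

theorem deformed_eq_lie_add_smul (hsum : πg + πk + πv = LinearMap.id)
    (hVV : ∀ a b, πv ⁅πv a, πv b⁆ = 0)
    (hB : ∀ a b, B a b = ⁅a, b⁆ - ⁅πv a, πv b⁆ + r • πg ⁅πv a, πv b⁆ + r • πk ⁅πv a, πv b⁆) :
    B = fun a b ↦ ⁅a, b⁆ + (r - 1) • ⁅πv a, πv b⁆ := by
  funext a b
  have hgk := LinearMap.congr_fun hsum ⁅πv a, πv b⁆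
  rw [LinearMap.add_apply, LinearMap.add_apply, hVV, add_zero, LinearMap.id_apply] at hgk
  rw [hB, add_assoc, ← smul_add, hgk]
  module

end Deformation

end

theorem deformed_bracket_jacobi_iff_general
    {h : Type*} [LieRing h] [LieAlgebra ℝ h]
    (πg πk πv : h →ₗ[ℝ] h)
    (hsum : πg + πk + πv = LinearMap.id)
    (hvg : πv ∘ₗ πg = 0) (hvk : πv ∘ₗ πk = 0)
    -- `g ⊕ k` is a subalgebra:
    (hsub : ∀ a b : h, πv ⁅a - πv a, b - πv b⁆ = 0)
    -- `g ⊕ k` normalizes `V`: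
    (hnorm : ∀ a b : h, πv ⁅a - πv a, πv b⁆ = ⁅a - πv a, πv b⁆)
    -- `[V, V] ⊆ g ⊕ k`:
    (hVV : ∀ a b : h, πv ⁅πv a, πv b⁆ = 0)
    (r s : ℝ)
    (B : h → h → h)
    (hB : ∀ a b : h, B a b
      = ⁅a, b⁆ - ⁅πv a, πv b⁆ + r • πg ⁅πv a, πv b⁆ + s • πk ⁅πv a, πv b⁆)
    -- some triple in `V` has nonzero `g`-component Jacobiator:
    (hΩ : ∃ X Y Z : h, πv X = X ∧ πv Y = Y ∧ πv Z = Z ∧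
      ⁅πg ⁅X, Y⁆, Z⁆ + ⁅πg ⁅Z, X⁆, Y⁆ + ⁅πg ⁅Y, Z⁆, X⁆ ≠ 0) :
    (∀ a b c : h, B (B a b) c + B (B c a) b + B (B b c) a = 0) ↔ r = s := by
  change (∀ a b c, jacobiator B a b c = 0) ↔ r = s
  constructor
  · intro hJ
    obtain ⟨X, Y, Z, hX, hY, hZ, hne⟩ := hΩ
    have hXYZ := jacobiator_deformed_of_proj_eq_self πg πk πv r s B hsum hvg hvk hVV hB hX hY hZ
    rw [hJ, eq_comm, smul_eq_zero, sub_eq_zero] at hXYZ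
    exact hXYZ.resolve_right hne
  · rintro rfl
    rw [deformed_eq_lie_add_smul πg πk πv r B hsum hVV hB]
    exact jacobiator_lie_add_smul_lie_proj πv hsub hnorm hVV (r - 1)

/-- Let `h = g ⊕ k ⊕ V` be a Lie algebra (given by projections `πg, πk, πv`) with
`g ⊕ k` a subalgebra normalizing `V` and `[V,V] ⊆ g ⊕ k`. Deform the bracket so that
on `V × V` it becomes `r·Ω_g + s·Ω_k`. If some triple in `V` has nonzero `g`-component
Jacobiator, then the deformed product satisfies the Jacobi identity iff `r = s`. -/
theorem deformed_bracket_jacobi_iff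
    {h : Type*} [LieRing h] [LieAlgebra ℝ h]
    (πg πk πv : h →ₗ[ℝ] h)
    (hsum : πg + πk + πv = LinearMap.id)
    (hgg : πg ∘ₗ πg = πg) (hkk : πk ∘ₗ πk = πk) (hvv : πv ∘ₗ πv = πv)
    (hgk : πg ∘ₗ πk = 0) (hgv : πg ∘ₗ πv = 0) (hkg : πk ∘ₗ πg = 0)
    (hkv : πk ∘ₗ πv = 0) (hvg : πv ∘ₗ πg = 0) (hvk : πv ∘ₗ πk = 0)
    -- `g ⊕ k` is a subalgebra:
    (hsub : ∀ a b : h, πv ⁅a - πv a, b - πv b⁆ = 0)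
    -- `g ⊕ k` normalizes `V`:
    (hnorm : ∀ a b : h, πv ⁅a - πv a, πv b⁆ = ⁅a - πv a, πv b⁆)
    -- `[V, V] ⊆ g ⊕ k`:
    (hVV : ∀ a b : h, πv ⁅πv a, πv b⁆ = 0)
    (r s : ℝ)
    (B : h → h → h)
    (hB : ∀ a b : h, B a b
      = ⁅a, b⁆ - ⁅πv a, πv b⁆ + r • πg ⁅πv a, πv b⁆ + s • πk ⁅πv a, πv b⁆)
    -- some triple in `V` has nonzero `g`-component Jacobiator:
    (hΩ : ∃ X Y Z : h, πv X = X ∧ πv Y = Y ∧ πv Z = Z ∧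
      ⁅πg ⁅X, Y⁆, Z⁆ + ⁅πg ⁅Z, X⁆, Y⁆ + ⁅πg ⁅Y, Z⁆, X⁆ ≠ 0) :
    (∀ a b c : h, B (B a b) c + B (B c a) b + B (B b c) a = 0) ↔ r = s :=
  deformed_bracket_jacobi_iff_general πg πk πv hsum hvg hvk hsub hnorm hVV r s B hB hΩ
end
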